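/- arXiv:2302.03311 — 2 statements merged into one kernel-verified Lean document; each statement's English description precedes it below -/
import Mathlib

section
/- Suppose m points a₁,…,a_m ∈ ℝ² do not all lie on a common conic section, i.e., the m×6 matrix V with rows v_i = ([a_i]₁², [a_i]₁[a_i]₂, [a_i]₂², [a_i]₁, [a_i]₂, 1) has rank 6. Then for any x⁰ ∈ ℝ² with x⁰ ≠ a_i for all i, the matrix A^o with rows [−2a_iᵀ, −2(‖a_i − x⁰‖ − ‖x⁰‖)] has full column rank 3. -/
theorem aux_rank {m k : ℕ} (A : Matrix (Fin m) (Fin k) ℝ) :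
    A.rank = k ↔ Function.Injective A.mulVecLin := by
  have hrn := LinearMap.finrank_range_add_finrank_ker A.mulVecLin
  rw [Module.finrank_fintype_fun_eq_card, Fintype.card_fin] at hrn
  rw [Matrix.rank]
  constructor
  · intro h
    rw [← LinearMap.ker_eq_bot, ← Submodule.finrank_eq_zero]
    omega
  · intro h
    rw [LinearMap.finrank_range_of_inj h, Module.finrank_fintype_fun_eq_card, Fintype.card_fin]

theorem norm_sq_two (v : EuclideanSpace ℝ (Fin 2)) : ‖v‖ ^ 2 = v 0 ^ 2 + v 1 ^ 2 := by
  rw [EuclideanSpace.norm_eq, Real.sq_sqrt (by positivity)]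
  simp [Fin.sum_univ_two, sq_abs]

theorem stmt_10 {m : ℕ} (a : Fin m → EuclideanSpace ℝ (Fin 2))
    (V : Matrix (Fin m) (Fin 6) ℝ)
    (hV : ∀ i, V i = ![a i 0 ^ 2, a i 0 * a i 1, a i 1 ^ 2, a i 0, a i 1, 1])
    (hrank : V.rank = 6)
    (x0 : EuclideanSpace ℝ (Fin 2)) (hx0 : ∀ i, x0 ≠ a i)
    (Ao : Matrix (Fin m) (Fin 3) ℝ)
    (hAo : ∀ i, Ao i = ![-2 * a i 0, -2 * a i 1, -2 * (‖a i - x0‖ - ‖x0‖)]) :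
    Ao.rank = 3 := by
  rw [aux_rank]
  rw [← LinearMap.ker_eq_bot, LinearMap.ker_eq_bot']
  intro y hy
  -- define candidate conic coefficients
  set c : Fin 6 → ℝ :=
    ![y 2 ^ 2 - y 0 ^ 2, -2 * y 0 * y 1, y 2 ^ 2 - y 1 ^ 2,
      -2 * y 2 ^ 2 * x0 0 + 2 * ‖x0‖ * y 2 * y 0,
      -2 * y 2 ^ 2 * x0 1 + 2 * ‖x0‖ * y 2 * y 1, 0] with hc
  have hVinj : Function.Injective V.mulVecLin := (aux_rank V).mp hrank
  have hVc : V.mulVecLin c = 0 := by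
    funext i
    have hyi : Ao.mulVecLin y i = 0 := by rw [hy]; rfl
    simp only [Matrix.mulVecLin_apply, Matrix.mulVec, dotProduct, hAo i,
      Fin.sum_univ_three] at hyi
    simp only [Matrix.mulVecLin_apply, Matrix.mulVec, dotProduct, hV i, hc,
      Fin.sum_univ_six, Pi.zero_apply]
    have h1 : ‖a i - x0‖ * y 2 = ‖x0‖ * y 2 - (a i 0 * y 0 + a i 1 * y 1) := by
      simp only [Matrix.cons_val_zero, Matrix.cons_val_one, Matrix.head_cons,
        Matrix.cons_val_two, Matrix.tail_cons] at hyi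
      nlinarith [hyi]
    have h2 : (‖a i - x0‖ * y 2) ^ 2 =
        (‖x0‖ * y 2 - (a i 0 * y 0 + a i 1 * y 1)) ^ 2 := by rw [h1]
    have hn : ‖a i - x0‖ ^ 2 = (a i 0 - x0 0) ^ 2 + (a i 1 - x0 1) ^ 2 := by
      rw [norm_sq_two]
      simp [PiLp.sub_apply]
    have hs : ‖x0‖ ^ 2 = x0 0 ^ 2 + x0 1 ^ 2 := norm_sq_two x0
    have r5 : (![a i 0 ^ 2, a i 0 * a i 1, a i 1 ^ 2, a i 0, a i 1, 1] : Fin 6 → ℝ) 5 = 1 := rfl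
    have r5' : (![y 2 ^ 2 - y 0 ^ 2, -2 * y 0 * y 1, y 2 ^ 2 - y 1 ^ 2,
        -2 * y 2 ^ 2 * x0 0 + 2 * ‖x0‖ * y 2 * y 0,
        -2 * y 2 ^ 2 * x0 1 + 2 * ‖x0‖ * y 2 * y 1, 0] : Fin 6 → ℝ) 5 = 0 := rfl
    rw [r5, r5']
    simp only [Matrix.cons_val_zero, Matrix.cons_val_one, Matrix.head_cons,
      Matrix.cons_val_two, Matrix.tail_cons, Matrix.cons_val_three, Matrix.cons_val_four,
      Fin.succ_zero_eq_one, Fin.succ_one_eq_two]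
    nlinarith [h2, hn, hs]
  have hc0 : c = 0 := by
    apply hVinj
    simpa using hVc
  have e0 := congrFun hc0 0
  have e1 := congrFun hc0 1
  have e2 := congrFun hc0 2
  simp [hc] at e0 e1 e2
  have hy01 : y 0 = 0 ∧ y 1 = 0 := by
    rcases e1 with h | h <;> constructor <;> nlinarith
  obtain ⟨hy0, hy1⟩ := hy01
  have hy2 : y 2 = 0 := by nlinarith [e0, hy0]
  funext j
  fin_cases j <;> simpa using ‹_›
end

section
/- Let Q be a symmetric positive definite (n+3)×(n+3) matrix partitioned with blocks Q₁₁ ∈ ℝ^{(n+1)×(n+1)}, Q₂₂ ∈ ℝ^{2×2}, and let S(z) be the (n+3)×(n+3) matrix that is zero except for its lower-right 2×2 block S₂₂(z). Then det(λI − Q⁻¹S(z)) = λ^{n+1} det(λI₂ − (Q/Q₂₂)⁻¹ S₂₂(z)), where Q/Q₂₂ = Q₂₂ − Q₂₁Q₁₁⁻¹Q₁₂ is the Schur complement; in particular the nonzero eigenvalues of Q⁻¹S(z) are exactly those of (Q/Q₂₂)⁻¹S₂₂(z). -/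
open Matrix in
theorem stmt_15 {n : ℕ}
    (Q11 : Matrix (Fin (n + 1)) (Fin (n + 1)) ℝ)
    (Q12 : Matrix (Fin (n + 1)) (Fin 2) ℝ)
    (Q21 : Matrix (Fin 2) (Fin (n + 1)) ℝ)
    (Q22 S22 : Matrix (Fin 2) (Fin 2) ℝ)
    (hQ : (Matrix.fromBlocks Q11 Q12 Q21 Q22).PosDef)
    (hS22 : S22.IsHermitian) :
    (∀ lam : ℝ,
      (lam • (1 : Matrix (Fin (n + 1) ⊕ Fin 2) (Fin (n + 1) ⊕ Fin 2) ℝ) -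
          (Matrix.fromBlocks Q11 Q12 Q21 Q22)⁻¹ *
            Matrix.fromBlocks 0 0 0 S22).det =
        lam ^ (n + 1) *
          (lam • (1 : Matrix (Fin 2) (Fin 2) ℝ) -
            (Q22 - Q21 * Q11⁻¹ * Q12)⁻¹ * S22).det) ∧
    (∀ μ : ℝ, μ ≠ 0 →
      (μ ∈ spectrum ℝ ((Matrix.fromBlocks Q11 Q12 Q21 Q22)⁻¹ *
          Matrix.fromBlocks 0 0 0 S22) ↔
        μ ∈ spectrum ℝ ((Q22 - Q21 * Q11⁻¹ * Q12)⁻¹ * S22))) := by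
  -- Q11 is positive definite
  have h11 : Q11.PosDef := by
    rw [Matrix.posDef_iff_dotProduct_mulVec]
    constructor
    · ext i j
      have := congrFun (congrFun hQ.1 (Sum.inl i)) (Sum.inl j)
      simpa [Matrix.conjTranspose_apply] using this
    · intro x hx
      have hx' : (Sum.elim x (0 : Fin 2 → ℝ)) ≠ 0 := by
        intro h
        apply hx
        ext i
        exact congrFun h (Sum.inl i)
      have := hQ.dotProduct_mulVec_pos hx'
      simpa [Matrix.fromBlocks_mulVec, Matrix.dotProduct_block] using this
  haveI i11 : Invertible Q11 := h11.isUnit.invertible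
  haveI iQ : Invertible (Matrix.fromBlocks Q11 Q12 Q21 Q22) := hQ.isUnit.invertible
  haveI iS : Invertible (Q22 - Q21 * ⅟Q11 * Q12) :=
    Matrix.invertibleOfFromBlocks₁₁Invertible Q11 Q12 Q21 Q22
  have hinv11 : ⅟Q11 = Q11⁻¹ := Matrix.invOf_eq_nonsing_inv Q11
  haveI iS' : Invertible (Q22 - Q21 * Q11⁻¹ * Q12) := by rwa [hinv11] at iS
  have hSinv : ⅟(Q22 - Q21 * ⅟Q11 * Q12) = (Q22 - Q21 * Q11⁻¹ * Q12)⁻¹ := by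
    rw [Matrix.invOf_eq_nonsing_inv, hinv11]
  -- Block form of the inverse
  have hQinv : (Matrix.fromBlocks Q11 Q12 Q21 Q22)⁻¹ =
      Matrix.fromBlocks
        (⅟Q11 + ⅟Q11 * Q12 * ⅟(Q22 - Q21 * ⅟Q11 * Q12) * Q21 * ⅟Q11)
        (-(⅟Q11 * Q12 * ⅟(Q22 - Q21 * ⅟Q11 * Q12)))
        (-(⅟(Q22 - Q21 * ⅟Q11 * Q12) * Q21 * ⅟Q11))
        (⅟(Q22 - Q21 * ⅟Q11 * Q12)) := by
    rw [← Matrix.invOf_eq_nonsing_inv]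
    exact Matrix.invOf_fromBlocks₁₁_eq Q11 Q12 Q21 Q22
  -- the key determinant identity
  have key : ∀ lam : ℝ,
      (lam • (1 : Matrix (Fin (n + 1) ⊕ Fin 2) (Fin (n + 1) ⊕ Fin 2) ℝ) -
          (Matrix.fromBlocks Q11 Q12 Q21 Q22)⁻¹ *
            Matrix.fromBlocks 0 0 0 S22).det =
        lam ^ (n + 1) *
          (lam • (1 : Matrix (Fin 2) (Fin 2) ℝ) -
            (Q22 - Q21 * Q11⁻¹ * Q12)⁻¹ * S22).det := by
    intro lam
    rw [hQinv, Matrix.fromBlocks_multiply]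
    have h1 : (1 : Matrix (Fin (n + 1) ⊕ Fin 2) (Fin (n + 1) ⊕ Fin 2) ℝ) =
        Matrix.fromBlocks 1 0 0 1 := (Matrix.fromBlocks_one).symm
    rw [h1, Matrix.fromBlocks_smul]
    rw [sub_eq_add_neg, Matrix.fromBlocks_neg, Matrix.fromBlocks_add]
    simp only [Matrix.mul_zero, Matrix.zero_mul, add_zero, zero_add, smul_zero,
      neg_zero, neg_neg, ← sub_eq_add_neg]
    rw [Matrix.det_fromBlocks_zero₂₁]
    congr 1
    · simp [Matrix.det_smul]
    · rw [hSinv]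
  refine ⟨key, fun μ hμ => ?_⟩
  have hdetiff : ∀ (m : Type) [Fintype m] [DecidableEq m]
      (M : Matrix m m ℝ), μ ∈ spectrum ℝ M ↔ (μ • (1 : Matrix m m ℝ) - M).det = 0 := by
    intro m _ _ M
    rw [spectrum.mem_iff, Matrix.isUnit_iff_isUnit_det, isUnit_iff_ne_zero, not_ne_iff]
    congr! 2
    rw [Algebra.algebraMap_eq_smul_one]
  rw [hdetiff _ _, hdetiff _ _, key μ]
  constructor
  · intro h
    rcases mul_eq_zero.mp h with h | h
    · exact absurd h (pow_ne_zero _ hμ)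
    · exact h
  · intro h
    rw [h, mul_zero]
end
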